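/- arXiv:1601.03817 — 3 statements merged into one kernel-verified Lean document; each statement's English description precedes it below -/
import Mathlib

section
/- Vertex–cell incidence: let v be a vertex point (2-I or 3-I) and let x be a cell point with cell C = Ω(x). Then v lies in the topological closure of C if and only if δ(v,x) = 2; consequently v does not lie in the closure of C if and only if δ(v,x) > 2 (and the value δ(v,x) < 2 never occurs). -/
noncomputable section

open Metric

abbrev Pt : Type := EuclideanSpace ℝ (Fin 2)

/-- The chromatic code of a point `x` with respect to generators `p`:
`code p x i` = #{j ≠ i : dist(x,p j) > dist(x,p i)} + (1/2)·#{j ≠ i : dist(x,p j) = dist(x,p i)}. -/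
def code {n : ℕ} (p : Fin n → Pt) (x : Pt) (i : Fin n) : ℚ :=
  (Set.ncard {j : Fin n | j ≠ i ∧ dist x (p i) < dist x (p j)} : ℚ)
  + (1/2) * (Set.ncard {j : Fin n | j ≠ i ∧ dist x (p j) = dist x (p i)} : ℚ)

/-- `{i,j}` is a tie of `x`. -/
def Tie {n : ℕ} (p : Fin n → Pt) (x : Pt) (i j : Fin n) : Prop :=
  i ≠ j ∧ dist x (p i) = dist x (p j)

/-- A cell point has no ties. -/
def CellPoint {n : ℕ} (p : Fin n → Pt) (x : Pt) : Prop :=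
  ∀ i j, ¬ Tie p x i j

/-- An edge point has exactly one (unordered) tie. -/
def EdgePoint {n : ℕ} (p : Fin n → Pt) (x : Pt) : Prop :=
  ∃ i j, Tie p x i j ∧ ∀ u v, Tie p x u v → ({u, v} : Set (Fin n)) = {i, j}

/-- A 2-I vertex point has exactly two ties, forming two disjoint pairs. -/
def Vertex2I {n : ℕ} (p : Fin n → Pt) (x : Pt) : Prop :=
  ∃ i j u v : Fin n, i ≠ j ∧ i ≠ u ∧ i ≠ v ∧ j ≠ u ∧ j ≠ v ∧ u ≠ v ∧
    Tie p x i j ∧ Tie p x u v ∧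
    ∀ a b, Tie p x a b → ({a, b} : Set (Fin n)) = {i, j} ∨ ({a, b} : Set (Fin n)) = {u, v}

/-- A 3-I vertex point: its ties are exactly the three pairs contained in some
3-element subset `{i,j,k}`. -/
def Vertex3I {n : ℕ} (p : Fin n → Pt) (x : Pt) : Prop :=
  ∃ i j k : Fin n, i ≠ j ∧ i ≠ k ∧ j ≠ k ∧
    ∀ a b, Tie p x a b ↔
      (a ≠ b ∧ a ∈ ({i, j, k} : Set (Fin n)) ∧ b ∈ ({i, j, k} : Set (Fin n)))

/-- The chromatic distance between two points. -/
def chromDist {n : ℕ} (p : Fin n → Pt) (x y : Pt) : ℚ :=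
  ∑ i, |code p x i - code p y i|

/-- The spatial particle of `x`: the fiber of the chromatic code through `x`. -/
def particle {n : ℕ} (p : Fin n → Pt) (x : Pt) : Set Pt :=
  {y | code p y = code p x}

/-- The generators are in general position: every point of the plane is one of the four
particle types, and perpendicular bisectors of distinct pairs are distinct non-parallel
lines (any two of them meet in exactly one point). -/
def GeneralPosition {n : ℕ} (p : Fin n → Pt) : Prop :=
  (∀ x : Pt, CellPoint p x ∨ EdgePoint p x ∨ Vertex2I p x ∨ Vertex3I p x) ∧
  (∀ i j u v : Fin n, i ≠ j → u ≠ v → ({i, j} : Set (Fin n)) ≠ {u, v} →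
    ∃! x : Pt, dist x (p i) = dist x (p j) ∧ dist x (p u) = dist x (p v))

/-- The set `{0,1,…,n−1}` viewed inside `ℚ`. -/
def codeRange (n : ℕ) : Set ℚ := {q | ∃ m : ℕ, m < n ∧ q = m}

/-!
Write `code z a = ∑ c, w (d a) (d c) - 1/2`, where `d c = dist z (p c)` and `w s t` is `1`, `1/2`
or `0` according as `s < t`, `s = t` or `s > t`. Since the half-planes `d a < d b` are open and
convex, `v` lies in the closure of the cell of `x` iff every strict inequality `d a < d b` at `v`
persists at `x`. In that case `code v a - code x a` is a sum of terms `±1/2`, one per tie partner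
of `a` at `v`.

The codes of the cell point `x` are distinct integers, while the codes of `v` agree on each tie
class. At a 2-I vertex the four tied codes are half-integers, so each of them is at distance at
least `1/2` from the corresponding code of `x`, and `δ(v,x) = 2` forces all deviations to be at
most `1/2`, which preserves every strict inequality. At a 3-I vertex three distinct integers lie at
total distance at least `2` from the common code of the tie class; in the refining case the three
deviations are at most `1` and sum to zero, because `∑ a, code z a` does not depend on `z`.
-/

open Finset

theorem dist_lt_dist_of_mem_openSegment {E : Type*} [NormedAddCommGroup E]
    [InnerProductSpace ℝ E] {a b v x y : E} (hv : dist v a ≤ dist v b)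
    (hx : dist x a < dist x b) (hy : y ∈ openSegment ℝ v x) : dist y a < dist y b := by
  have hsq : ∀ z : E,
      dist z a ^ 2 - dist z b ^ 2 = 2 * inner ℝ z (b - a) + (‖a‖ ^ 2 - ‖b‖ ^ 2) := by
    intro z
    rw [dist_eq_norm, dist_eq_norm, norm_sub_sq_real, norm_sub_sq_real, inner_sub_right]
    ring
  obtain ⟨s, t, hs, ht, hst, rfl⟩ := hy
  have hcomb : dist (s • v + t • x) a ^ 2 - dist (s • v + t • x) b ^ 2 =
      s * (dist v a ^ 2 - dist v b ^ 2) + t * (dist x a ^ 2 - dist x b ^ 2) := by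
    rw [hsq, hsq, hsq, inner_add_left, real_inner_smul_left, real_inner_smul_left]
    linear_combination (‖b‖ ^ 2 - ‖a‖ ^ 2) * hst
  have hvsq : dist v a ^ 2 ≤ dist v b ^ 2 := pow_le_pow_left₀ dist_nonneg hv 2
  have hxsq : dist x a ^ 2 < dist x b ^ 2 := pow_lt_pow_left₀ hx dist_nonneg two_ne_zero
  refine lt_of_pow_lt_pow_left₀ 2 dist_nonneg ?_
  nlinarith

section OrderedField

variable {α : Type*} [Field α] [LinearOrder α] [IsStrictOrderedRing α]

lemma two_le_abs_sub_add_abs_sub_add_abs_sub {a b c : α} (q : α) (hab : 1 ≤ |a - b|)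
    (hac : 1 ≤ |a - c|) (hbc : 1 ≤ |b - c|) : 2 ≤ |a - q| + |b - q| + |c - q| := by
  have := le_abs_self (a - q); have := neg_abs_le (a - q)
  have := le_abs_self (b - q); have := neg_abs_le (b - q)
  have := le_abs_self (c - q); have := neg_abs_le (c - q)
  rcases le_abs'.1 hab with h | h <;> rcases le_abs'.1 hac with h' | h' <;>
    rcases le_abs'.1 hbc with h'' | h'' <;> linarith

lemma abs_add_abs_add_abs_le_two {a b c : α} (h : a + b + c = 0) (ha : |a| ≤ 1) (hb : |b| ≤ 1)
    (hc : |c| ≤ 1) : |a| + |b| + |c| ≤ 2 := by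
  rw [abs_le] at ha hb hc
  rcases abs_cases a with ⟨ha', _⟩ | ⟨ha', _⟩ <;> rcases abs_cases b with ⟨hb', _⟩ | ⟨hb', _⟩ <;>
    rcases abs_cases c with ⟨hc', _⟩ | ⟨hc', _⟩ <;> linarith

lemma half_le_abs_add_half_sub (m k : ℕ) : 1 / 2 ≤ |(m : α) + 1 / 2 - k| := by
  rcases le_or_gt k m with h | h
  · have : (k : α) ≤ m := by exact_mod_cast h
    exact le_abs.2 (Or.inl (by linarith))
  · have : (m : α) + 1 ≤ k := by exact_mod_cast h
    exact le_abs.2 (Or.inr (by linarith))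

end OrderedField

lemma sum_three {ι β : Type*} [AddCommMonoid β] [DecidableEq ι] {i j k : ι} (hij : i ≠ j)
    (hik : i ≠ k) (hjk : j ≠ k) (g : ι → β) : ∑ a ∈ {i, j, k}, g a = g i + g j + g k := by
  rw [sum_insert (by simp [hij, hik]), sum_pair hjk, add_assoc]

section CmpWeight

variable {α : Type*} [LinearOrder α]

def cmpWeight (s t : α) : ℚ := if s < t then 1 else if s = t then 1 / 2 else 0

lemma cmpWeight_of_lt {s t : α} (h : s < t) : cmpWeight s t = 1 := if_pos h

lemma cmpWeight_self (s : α) : cmpWeight s s = 1 / 2 := by simp [cmpWeight]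

lemma cmpWeight_of_gt {s t : α} (h : t < s) : cmpWeight s t = 0 := by
  simp [cmpWeight, h.not_gt, h.ne']

lemma cmpWeight_add_cmpWeight (s t : α) : cmpWeight s t + cmpWeight t s = 1 := by
  rcases lt_trichotomy s t with h | rfl | h
  · rw [cmpWeight_of_lt h, cmpWeight_of_gt h]; norm_num
  · rw [cmpWeight_self]; norm_num
  · rw [cmpWeight_of_gt h, cmpWeight_of_lt h]; norm_num

lemma cmpWeight_antitone_left {s s' : α} (h : s ≤ s') (t : α) :
    cmpWeight s' t ≤ cmpWeight s t := by
  unfold cmpWeight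
  split_ifs <;> norm_num <;> grind

lemma abs_half_sub_cmpWeight_le (s t : α) : |1 / 2 - cmpWeight s t| ≤ 1 / 2 := by
  unfold cmpWeight
  split_ifs <;> norm_num [abs_of_nonneg]

end CmpWeight

section Code

open scoped Classical

variable {n : ℕ} {p : Fin n → Pt}

lemma Tie.symm {z : Pt} {a b : Fin n} (h : Tie p z a b) : Tie p z b a := ⟨h.1.symm, h.2.symm⟩

lemma ne_of_dist_lt {z : Pt} {a b : Fin n} (h : dist z (p a) < dist z (p b)) : a ≠ b :=
  fun hab => h.ne (hab ▸ rfl)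

def tiePartners (p : Fin n → Pt) (z : Pt) (a : Fin n) : Finset (Fin n) := {c | Tie p z a c}

@[simp]
lemma mem_tiePartners {z : Pt} {a c : Fin n} : c ∈ tiePartners p z a ↔ Tie p z a c := by
  simp [tiePartners]

lemma tiePartners_eq_empty_of_cellPoint {x : Pt} (hx : CellPoint p x) (a : Fin n) :
    tiePartners p x a = ∅ :=
  eq_empty_of_forall_notMem fun c hc => hx a c (mem_tiePartners.1 hc)

lemma code_eq_card_add_half_card (z : Pt) (a : Fin n) :
    code p z a = #{c | dist z (p a) < dist z (p c)} + #(tiePartners p z a) / 2 := by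
  have hfar : {j | j ≠ a ∧ dist z (p a) < dist z (p j)} =
      ↑({c | dist z (p a) < dist z (p c)} : Finset (Fin n)) := by
    ext c
    simp only [Set.mem_ofPred_eq, coe_filter, mem_univ, true_and, and_iff_right_iff_imp]
    exact fun h => (ne_of_dist_lt h).symm
  have htie : {j | j ≠ a ∧ dist z (p j) = dist z (p a)} = ↑(tiePartners p z a) := by
    ext c
    simp only [Set.mem_ofPred_eq, mem_coe, mem_tiePartners, Tie]
    rw [ne_comm, eq_comm]
  rw [code, hfar, htie, Set.ncard_coe_finset, Set.ncard_coe_finset]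
  ring

lemma code_eq_sum_cmpWeight (z : Pt) (a : Fin n) :
    code p z a = ∑ c, cmpWeight (dist z (p a)) (dist z (p c)) - 1 / 2 := by
  have hsplit : ∀ c, cmpWeight (dist z (p a)) (dist z (p c)) =
      (if dist z (p a) < dist z (p c) then 1 else 0) +
        (if c ∈ tiePartners p z a then 1 / 2 else 0) + (if a = c then 1 / 2 else 0) := by
    intro c
    rcases lt_trichotomy (dist z (p a)) (dist z (p c)) with h | h | h
    · simp [cmpWeight_of_lt h, Tie, h, h.ne, ne_of_dist_lt h]
    · by_cases hac : a = c
      · subst hac; simp [cmpWeight_self, Tie]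
      · simp [h, cmpWeight_self, Tie, hac]
    · simp [cmpWeight_of_gt h, Tie, h.not_gt, h.ne', (ne_of_dist_lt h).symm]
  simp only [hsplit, sum_add_distrib, sum_boole, sum_ite_mem, univ_inter, sum_const,
    sum_ite_eq, mem_univ, if_true, nsmul_eq_mul, code_eq_card_add_half_card]
  ring

lemma code_eq_of_dist_eq {z : Pt} {a b : Fin n} (h : dist z (p a) = dist z (p b)) :
    code p z a = code p z b := by
  simp only [code_eq_sum_cmpWeight, h]

lemma code_add_one_le_of_dist_lt {z : Pt} {a b : Fin n} (h : dist z (p a) < dist z (p b)) :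
    code p z b + 1 ≤ code p z a := by
  have hterm : ∀ c ∈ univ, 0 ≤ cmpWeight (dist z (p a)) (dist z (p c)) -
      cmpWeight (dist z (p b)) (dist z (p c)) :=
    fun c _ => sub_nonneg.2 (cmpWeight_antitone_left h.le _)
  have hpair := sum_le_sum_of_subset_of_nonneg (subset_univ {a, b}) fun c hc _ => hterm c hc
  rw [sum_pair (ne_of_dist_lt h), cmpWeight_self, cmpWeight_self, cmpWeight_of_gt h,
    cmpWeight_of_lt h, sum_sub_distrib] at hpair
  rw [code_eq_sum_cmpWeight, code_eq_sum_cmpWeight]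
  linarith

lemma dist_lt_of_code_lt {z : Pt} {a b : Fin n} (h : code p z b < code p z a) :
    dist z (p a) < dist z (p b) := by
  rcases lt_trichotomy (dist z (p a)) (dist z (p b)) with hlt | heq | hgt
  · exact hlt
  · exact absurd (code_eq_of_dist_eq heq) h.ne'
  · linarith [code_add_one_le_of_dist_lt hgt]

lemma one_le_abs_code_sub_of_cellPoint {x : Pt} (hx : CellPoint p x) {a b : Fin n}
    (hab : a ≠ b) : 1 ≤ |code p x a - code p x b| := by
  rcases lt_trichotomy (dist x (p a)) (dist x (p b)) with h | h | h
  · exact le_abs.2 (Or.inl (by linarith [code_add_one_le_of_dist_lt h]))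
  · exact absurd ⟨hab, h⟩ (hx a b)
  · exact le_abs.2 (Or.inr (by linarith [code_add_one_le_of_dist_lt h]))

lemma half_le_abs_code_sub {v x : Pt} (hx : CellPoint p x) {a : Fin n}
    (h : #(tiePartners p v a) = 1) : 1 / 2 ≤ |code p v a - code p x a| := by
  rw [code_eq_card_add_half_card, code_eq_card_add_half_card, h,
    tiePartners_eq_empty_of_cellPoint hx, card_empty, Nat.cast_zero, zero_div, add_zero,
    Nat.cast_one]
  exact half_le_abs_add_half_sub _ _

lemma sum_code (z : Pt) : ∑ a, code p z a = n * (n - 1) / 2 := by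
  set W : Fin n → Fin n → ℚ := fun a c => cmpWeight (dist z (p a)) (dist z (p c))
  have hsymm : 2 * ∑ a, ∑ c, W a c = n * n := by
    calc 2 * ∑ a, ∑ c, W a c = ∑ a, ∑ c, (W a c + W c a) := by
          rw [two_mul]
          nth_rewrite 2 [sum_comm]
          simp only [sum_add_distrib]
      _ = n * n := by simp [W, cmpWeight_add_cmpWeight]
  simp only [code_eq_sum_cmpWeight, sum_sub_distrib, sum_const, card_univ, Fintype.card_fin,
    nsmul_eq_mul]
  linarith

lemma sum_abs_code_sub_le_chromDist (v x : Pt) (T : Finset (Fin n)) :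
    ∑ a ∈ T, |code p v a - code p x a| ≤ chromDist p v x :=
  sum_le_sum_of_subset_of_nonneg (subset_univ T) fun _ _ _ => abs_nonneg _

def DistOrderRefines (p : Fin n → Pt) (v x : Pt) : Prop :=
  ∀ a b, dist v (p a) < dist v (p b) → dist x (p a) < dist x (p b)

lemma code_eq_of_distOrderRefines {x y : Pt} (hx : CellPoint p x)
    (h : DistOrderRefines p x y) : code p y = code p x := by
  funext a
  simp only [code_eq_sum_cmpWeight]
  congr 1
  refine sum_congr rfl fun c _ => ?_
  rcases lt_trichotomy (dist x (p a)) (dist x (p c)) with hlt | heq | hgt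
  · rw [cmpWeight_of_lt hlt, cmpWeight_of_lt (h a c hlt)]
  · obtain rfl : a = c := by_contra fun hac => hx a c ⟨hac, heq⟩
    rw [cmpWeight_self, cmpWeight_self]
  · rw [cmpWeight_of_gt hgt, cmpWeight_of_gt (h c a hgt)]

lemma distOrderRefines_of_mem_closure {v x : Pt} (hv : v ∈ closure (particle p x)) :
    DistOrderRefines p v x := by
  have hnear : ∀ᶠ y in nhds v, DistOrderRefines p v y := by
    refine Filter.eventually_all.2 fun a => Filter.eventually_all.2 fun b => ?_
    by_cases hab : dist v (p a) < dist v (p b)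
    · exact ((continuous_id.dist continuous_const).continuousAt.eventually_lt
        (continuous_id.dist continuous_const).continuousAt hab).mono fun y hy _ => hy
    · exact Filter.Eventually.of_forall fun _ h => absurd h hab
  obtain ⟨y, hy, hvy⟩ := ((mem_closure_iff_frequently.1 hv).and_eventually hnear).exists
  intro a b hab
  have hcode := code_add_one_le_of_dist_lt (hvy a b hab)
  rw [show code p y = code p x from hy] at hcode
  exact dist_lt_of_code_lt (by linarith)

lemma openSegment_subset_particle {v x : Pt} (hx : CellPoint p x)
    (h : DistOrderRefines p v x) : openSegment ℝ v x ⊆ particle p x := fun _ hy =>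
  code_eq_of_distOrderRefines hx fun a b hab =>
    dist_lt_dist_of_mem_openSegment (not_lt.1 fun hba => (h b a hba).asymm hab) hab hy

lemma mem_closure_particle_iff {v x : Pt} (hx : CellPoint p x) :
    v ∈ closure (particle p x) ↔ DistOrderRefines p v x :=
  ⟨distOrderRefines_of_mem_closure, fun h => closure_mono (openSegment_subset_particle hx h)
    (segment_subset_closure_openSegment (left_mem_segment ℝ v x))⟩

lemma abs_code_sub_le_of_distOrderRefines {v x : Pt} (h : DistOrderRefines p v x) (a : Fin n) :
    |code p v a - code p x a| ≤ #(tiePartners p v a) / 2 := by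
  set D : Fin n → ℚ := fun c =>
    cmpWeight (dist v (p a)) (dist v (p c)) - cmpWeight (dist x (p a)) (dist x (p c))
  have hout : ∀ c ∉ tiePartners p v a, D c = 0 := by
    intro c hc
    rcases lt_trichotomy (dist v (p a)) (dist v (p c)) with hlt | heq | hgt
    · simp only [D, cmpWeight_of_lt hlt, cmpWeight_of_lt (h a c hlt), sub_self]
    · obtain rfl : a = c := by_contra fun hac => hc (mem_tiePartners.2 ⟨hac, heq⟩)
      simp only [D, cmpWeight_self, sub_self]
    · simp only [D, cmpWeight_of_gt hgt, cmpWeight_of_gt (h c a hgt), sub_self]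
  have hin : ∀ c ∈ tiePartners p v a, |D c| ≤ 1 / 2 := by
    intro c hc
    simp only [D, (mem_tiePartners.1 hc).2, cmpWeight_self]
    exact abs_half_sub_cmpWeight_le _ _
  calc |code p v a - code p x a| = |∑ c ∈ tiePartners p v a, D c| := by
        rw [code_eq_sum_cmpWeight, code_eq_sum_cmpWeight, sub_sub_sub_cancel_right,
          ← sum_sub_distrib, sum_subset (subset_univ _) fun c _ hc => hout c hc]
    _ ≤ ∑ c ∈ tiePartners p v a, |D c| := abs_sum_le_sum_abs _ _
    _ ≤ ∑ _c ∈ tiePartners p v a, (1 / 2 : ℚ) := sum_le_sum hin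
    _ = #(tiePartners p v a) / 2 := by rw [sum_const, nsmul_eq_mul]; ring

lemma dist_lt_of_abs_code_sub_add_abs_code_sub_le_one {v x : Pt} (hx : CellPoint p x)
    {a b : Fin n} (hab : dist v (p a) < dist v (p b))
    (h : |code p v a - code p x a| + |code p v b - code p x b| ≤ 1) :
    dist x (p a) < dist x (p b) := by
  have hv := code_add_one_le_of_dist_lt hab
  have hsep := one_le_abs_code_sub_of_cellPoint hx (ne_of_dist_lt hab)
  have ha := le_abs_self (code p v a - code p x a)
  have hb := neg_abs_le (code p v b - code p x b)
  refine dist_lt_of_code_lt ?_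
  rcases le_abs.1 hsep with h' | h' <;> linarith

lemma Vertex2I.exists_card_tiePartners {v : Pt} (hv : Vertex2I p v) :
    ∃ T : Finset (Fin n), #T = 4 ∧ ∀ a, #(tiePartners p v a) = if a ∈ T then 1 else 0 := by
  obtain ⟨i, j, u, w, hij, hiu, hiw, hju, hjw, huw, tij, tuw, hties⟩ := hv
  have htie : ∀ a c, Tie p v a c ↔
      a = i ∧ c = j ∨ a = j ∧ c = i ∨ a = u ∧ c = w ∨ a = w ∧ c = u := by
    refine fun a c => ⟨fun h => ?_, ?_⟩
    · have := hties a c h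
      simp only [Set.pair_eq_pair_iff] at this
      grind
    · rintro (⟨rfl, rfl⟩ | ⟨rfl, rfl⟩ | ⟨rfl, rfl⟩ | ⟨rfl, rfl⟩)
      exacts [tij, tij.symm, tuw, tuw.symm]
  refine ⟨{i, j, u, w}, by grind, fun a => ?_⟩
  split_ifs with ha
  · simp only [mem_insert, mem_singleton] at ha
    rw [card_eq_one]
    rcases ha with rfl | rfl | rfl | rfl <;>
      [refine ⟨j, ?_⟩; refine ⟨i, ?_⟩; refine ⟨w, ?_⟩; refine ⟨u, ?_⟩] <;>
      ext <;> simp only [mem_tiePartners, htie, mem_singleton] <;> grind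
  · rw [card_eq_zero]
    ext c
    simp only [mem_tiePartners, htie, notMem_empty, iff_false]
    grind

lemma chromDist_eq_two_iff_of_vertex2I {v x : Pt} (hx : CellPoint p x) (hv : Vertex2I p v) :
    2 ≤ chromDist p v x ∧ (chromDist p v x = 2 ↔ DistOrderRefines p v x) := by
  obtain ⟨T, hT, hcard⟩ := hv.exists_card_tiePartners
  set g : Fin n → ℚ := fun a => #(tiePartners p v a) / 2
  have hg : ∑ a, g a = 2 := by
    simp only [g, hcard, ← sum_div, Nat.cast_ite, Nat.cast_one, Nat.cast_zero, sum_boole]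
    norm_num [hT]
  have hg_le : ∀ a, g a ≤ 1 / 2 := fun a => by
    simp only [g, hcard a]
    split_ifs <;> norm_num
  have hg_le_abs : ∀ a ∈ univ, g a ≤ |code p v a - code p x a| := by
    intro a _
    by_cases ha : a ∈ T
    · have h1 : #(tiePartners p v a) = 1 := by rw [hcard a, if_pos ha]
      simpa [g, h1] using half_le_abs_code_sub hx h1
    · simp [g, hcard a, ha]
  have hle : 2 ≤ chromDist p v x := hg.symm.le.trans (sum_le_sum hg_le_abs)
  refine ⟨hle, fun h2 => ?_, fun h => ?_⟩
  · have heq := (sum_eq_sum_iff_of_le hg_le_abs).1 (hg.trans h2.symm)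
    refine fun a b hab => dist_lt_of_abs_code_sub_add_abs_code_sub_le_one hx hab ?_
    rw [← heq a (mem_univ a), ← heq b (mem_univ b)]
    linarith [hg_le a, hg_le b]
  · exact le_antisymm (hg ▸ sum_le_sum fun a _ => abs_code_sub_le_of_distOrderRefines h a) hle

lemma one_le_abs_code_sub_add_abs_code_sub_of_tie {v x : Pt} (hx : CellPoint p x)
    {a b : Fin n} (h : Tie p v a b) :
    1 ≤ |code p v a - code p x a| + |code p v b - code p x b| :=
  calc 1 ≤ |code p x a - code p x b| := one_le_abs_code_sub_of_cellPoint hx h.1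
    _ = |(code p v b - code p x b) - (code p v a - code p x a)| := by
        rw [code_eq_of_dist_eq h.2]; congr 1; ring
    _ ≤ _ := (abs_sub _ _).trans_eq (add_comm _ _)

lemma two_le_abs_code_sub_add_abs_code_sub_add_abs_code_sub_of_tie {v x : Pt}
    (hx : CellPoint p x) {i j k : Fin n} (hij : Tie p v i j) (hik : Tie p v i k) (hjk : j ≠ k) :
    2 ≤ |code p v i - code p x i| + |code p v j - code p x j| + |code p v k - code p x k| := by
  rw [abs_sub_comm, abs_sub_comm (code p v j), abs_sub_comm (code p v k),
    ← code_eq_of_dist_eq hij.2, ← code_eq_of_dist_eq hik.2]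
  exact two_le_abs_sub_add_abs_sub_add_abs_sub _ (one_le_abs_code_sub_of_cellPoint hx hij.1)
    (one_le_abs_code_sub_of_cellPoint hx hik.1) (one_le_abs_code_sub_of_cellPoint hx hjk)

section Vertex3I

variable {v x : Pt} {i j k : Fin n}

lemma distOrderRefines_of_chromDist_eq_two_of_triple (hx : CellPoint p x) (hij : i ≠ j)
    (hik : i ≠ k) (hjk : j ≠ k)
    (htie : ∀ a b, Tie p v a b ↔
      a ≠ b ∧ a ∈ ({i, j, k} : Finset (Fin n)) ∧ b ∈ ({i, j, k} : Finset (Fin n)))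
    (h2 : chromDist p v x = 2) : DistOrderRefines p v x := by
  set T : Finset (Fin n) := {i, j, k}
  set f : Fin n → ℚ := fun a => |code p v a - code p x a|
  have hmem : i ∈ T ∧ j ∈ T ∧ k ∈ T := by simp [T]
  have tie : ∀ a ∈ T, ∀ b ∈ T, a ≠ b → Tie p v a b := fun a ha b hb hab =>
    (htie a b).2 ⟨hab, ha, hb⟩
  have hpair : ∀ a ∈ T, ∀ b ∈ T, a ≠ b → 1 ≤ f a + f b := fun a ha b hb hab =>
    one_le_abs_code_sub_add_abs_code_sub_of_tie hx (tie a ha b hb hab)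
  have htriple : 2 ≤ f i + f j + f k :=
    two_le_abs_code_sub_add_abs_code_sub_add_abs_code_sub_of_tie hx
      (tie i hmem.1 j hmem.2.1 hij) (tie i hmem.1 k hmem.2.2 hik) hjk
  have hT : f i + f j + f k ≤ 2 := by
    rw [← h2, ← sum_three hij hik hjk]
    exact sum_abs_code_sub_le_chromDist v x T
  have hout : ∀ a ∉ T, f a = 0 := fun a ha => by
    have := sum_abs_code_sub_le_chromDist (p := p) v x (insert a T)
    rw [sum_insert ha, sum_three hij hik hjk, h2] at this
    exact le_antisymm (by linarith) (abs_nonneg _)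
  have hone : ∀ a, f a ≤ 1 := fun a => by
    by_cases ha : a ∈ T
    · simp only [T, mem_insert, mem_singleton] at ha
      rcases ha with rfl | rfl | rfl
      · linarith [hpair j hmem.2.1 k hmem.2.2 hjk]
      · linarith [hpair i hmem.1 k hmem.2.2 hik]
      · linarith [hpair i hmem.1 j hmem.2.1 hij]
    · simp [hout a ha]
  refine fun a b hab => dist_lt_of_abs_code_sub_add_abs_code_sub_le_one hx hab ?_
  by_cases ha : a ∈ T
  · by_cases hb : b ∈ T
    · exact absurd (tie a ha b hb (ne_of_dist_lt hab)).2 hab.ne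
    · linarith [hone a, hout b hb]
  · linarith [hone b, hout a ha]

lemma chromDist_le_two_of_triple (hij : i ≠ j) (hik : i ≠ k) (hjk : j ≠ k)
    (htie : ∀ a b, Tie p v a b ↔
      a ≠ b ∧ a ∈ ({i, j, k} : Finset (Fin n)) ∧ b ∈ ({i, j, k} : Finset (Fin n)))
    (h : DistOrderRefines p v x) : chromDist p v x ≤ 2 := by
  set T : Finset (Fin n) := {i, j, k}
  have hout : ∀ a ∉ T, code p v a = code p x a := fun a ha => by
    have := abs_code_sub_le_of_distOrderRefines h a
    rw [card_eq_zero.2 (eq_empty_of_forall_notMem fun c hc =>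
      ha ((htie a c).1 (mem_tiePartners.1 hc)).2.1), Nat.cast_zero, zero_div] at this
    exact sub_eq_zero.1 (abs_nonpos_iff.1 this)
  have hone : ∀ a ∈ T, |code p v a - code p x a| ≤ 1 := fun a ha => by
    have hsub : tiePartners p v a ⊆ T.erase a := fun c hc => by
      obtain ⟨hac, -, hc⟩ := (htie a c).1 (mem_tiePartners.1 hc)
      exact mem_erase.2 ⟨hac.symm, hc⟩
    have hcard : (#(tiePartners p v a) : ℚ) ≤ 2 := by
      have := card_le_card hsub
      rw [card_erase_of_mem ha, card_eq_three.2 ⟨i, j, k, hij, hik, hjk, rfl⟩] at this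
      exact_mod_cast this
    linarith [abs_code_sub_le_of_distOrderRefines h a]
  have hbal : ∑ a ∈ T, (code p v a - code p x a) = 0 := by
    rw [sum_subset (subset_univ T) fun a _ ha => sub_eq_zero.2 (hout a ha), sum_sub_distrib,
      sum_code, sum_code, sub_self]
  have hδ : chromDist p v x = ∑ a ∈ T, |code p v a - code p x a| :=
    (sum_subset (subset_univ T) fun a _ ha => by simp [hout a ha]).symm
  have hmem : i ∈ T ∧ j ∈ T ∧ k ∈ T := by simp [T]
  rw [sum_three hij hik hjk] at hbal
  rw [hδ, sum_three hij hik hjk]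
  exact abs_add_abs_add_abs_le_two hbal (hone i hmem.1) (hone j hmem.2.1) (hone k hmem.2.2)

lemma chromDist_eq_two_iff_of_vertex3I (hx : CellPoint p x) (hv : Vertex3I p v) :
    2 ≤ chromDist p v x ∧ (chromDist p v x = 2 ↔ DistOrderRefines p v x) := by
  obtain ⟨i, j, k, hij, hik, hjk, hties⟩ := hv
  have htie : ∀ a b, Tie p v a b ↔
      a ≠ b ∧ a ∈ ({i, j, k} : Finset (Fin n)) ∧ b ∈ ({i, j, k} : Finset (Fin n)) := by
    simpa using hties
  have hle : 2 ≤ chromDist p v x := by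
    refine (two_le_abs_code_sub_add_abs_code_sub_add_abs_code_sub_of_tie hx
      ((htie i j).2 ⟨hij, by simp, by simp⟩) ((htie i k).2 ⟨hik, by simp, by simp⟩) hjk).trans ?_
    rw [← sum_three hij hik hjk fun a => |code p v a - code p x a|]
    exact sum_abs_code_sub_le_chromDist v x _
  exact ⟨hle, ⟨distOrderRefines_of_chromDist_eq_two_of_triple hx hij hik hjk htie,
    fun h => le_antisymm (chromDist_le_two_of_triple hij hik hjk htie h) hle⟩⟩

end Vertex3I

end Code

theorem vertex_cell_incidence_general {n : ℕ} (p : Fin n → Pt) (v x : Pt)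
    (hv : Vertex2I p v ∨ Vertex3I p v) (hx : CellPoint p x) :
    (v ∈ closure (particle p x) ↔ chromDist p v x = 2) ∧
    2 ≤ chromDist p v x ∧
    (v ∉ closure (particle p x) ↔ 2 < chromDist p v x) := by
  obtain ⟨hle, hiff⟩ := hv.elim (chromDist_eq_two_iff_of_vertex2I hx)
    (chromDist_eq_two_iff_of_vertex3I hx)
  have hclosure := (mem_closure_particle_iff hx).trans hiff.symm
  refine ⟨hclosure, hle, ?_⟩
  rw [hclosure, hle.lt_iff_ne, ne_comm]

/-- vertex–cell incidence: a vertex point `v` (2-I or 3-I) lies in the closure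
of the cell `Ω(x)` of a cell point `x` iff `δ(v,x) = 2`; moreover `δ(v,x) < 2` never occurs,
so `v` does not lie in the closure iff `δ(v,x) > 2`. -/
theorem vertex_cell_incidence {n : ℕ} (hn : 2 ≤ n) (p : Fin n → Pt)
    (hp : Function.Injective p) (v x : Pt)
    (hv : Vertex2I p v ∨ Vertex3I p v) (hx : CellPoint p x) :
    (v ∈ closure (particle p x) ↔ chromDist p v x = 2) ∧
    2 ≤ chromDist p v x ∧
    (v ∉ closure (particle p x) ↔ 2 < chromDist p v x) :=
  vertex_cell_incidence_general p v x hv hx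
end
end

section
/- Edge–cell containment: let e be an edge point and x a cell point. Then Ω(e) is contained in the topological closure of Ω(x) (i.e., the edge is a boundary edge of the cell) if and only if δ(e,x) = 1. -/
noncomputable section

open Metric

/-
A code is the vector of midranks of the distances to the generators, so it only
records which distances are smaller, equal or larger, and strict comparisons persist near a
point. At an edge point `e` with tie `{i, j}`, a nearby point that breaks the tie therefore keeps
all other comparisons, and its code is `code e` shifted by `±1/2` at `i` and `∓1/2` at `j`;
moving `e` slightly in the direction `p i - p j` breaks the tie in favour of `i`. So the edge lies
in the closure of exactly the cells with these two shifted codes. Cell codes are integers while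
`code e` is half-integral at `i` and `j`, hence a cell is at chromatic distance `1` from `e`
exactly when its code is one of the two shifts.
-/

open Function Filter Topology

section MidRank

variable {ι α : Type*}

def IsUniqueTie (d : ι → α) (i j : ι) : Prop :=
  i ≠ j ∧ d i = d j ∧ ∀ k l, k ≠ l → d k = d l → ({k, l} : Set ι) = {i, j}

theorem IsUniqueTie.symm {d : ι → α} {i j : ι} (h : IsUniqueTie d i j) : IsUniqueTie d j i :=
  ⟨h.1.symm, h.2.1.symm, fun k l hkl hd => (h.2.2 k l hkl hd).trans (Set.pair_comm i j)⟩

def tieShift [DecidableEq ι] (i j : ι) : ι → ℚ :=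
  Pi.single i (1 / 2) - Pi.single j (1 / 2)

theorem sum_abs_tieShift [Fintype ι] [DecidableEq ι] {i j : ι} (hij : i ≠ j) :
    ∑ k, |tieShift i j k| = 1 := by
  rw [Fintype.sum_eq_add i j hij fun k hk => by simp [tieShift, hk.1, hk.2]]
  simp [tieShift, hij, hij.symm]
  norm_num

theorem eq_tieShift_of_sum_abs_eq_one [Fintype ι] [DecidableEq ι] {f : ι → ℚ} {i j : ι}
    (hij : i ≠ j) (hi : 1 / 2 ≤ |f i|) (hj : 1 / 2 ≤ |f j|) (hne : f i ≠ f j)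
    (hsum : ∑ k, |f k| = 1) : f = tieShift i j ∨ f = tieShift j i := by
  have hsplit := Finset.sum_sdiff (f := fun k => |f k|) (Finset.subset_univ {i, j})
  rw [Finset.sum_pair hij, hsum] at hsplit
  have hrest_nonneg : 0 ≤ ∑ k ∈ Finset.univ \ {i, j}, |f k| :=
    Finset.sum_nonneg fun k _ => abs_nonneg _
  have hrest : ∀ k, k ≠ i → k ≠ j → f k = 0 := fun k hki hkj =>
    abs_eq_zero.1 <| (Finset.sum_eq_zero_iff_of_nonneg fun k _ => abs_nonneg (f k)).1
      (by linarith) k (by simp [hki, hkj])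
  have hfi : f i = 1 / 2 ∨ f i = -(1 / 2) := (abs_eq (by norm_num)).1 (by linarith)
  have hfj : f j = 1 / 2 ∨ f j = -(1 / 2) := (abs_eq (by norm_num)).1 (by linarith)
  have hext : ∀ a b, a ≠ b → f a = 1 / 2 → f b = -(1 / 2) → (∀ k, k ≠ a → k ≠ b → f k = 0) →
      f = tieShift a b := by
    intro a b hab ha hb h0
    funext k
    by_cases hka : k = a
    · subst hka; simp [tieShift, hab, ha]
    by_cases hkb : k = b
    · subst hkb; simp [tieShift, hab.symm, hb]
    · simp [tieShift, hka, hkb, h0 k hka hkb]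
  rcases hfi with hfi | hfi <;> rcases hfj with hfj | hfj
  · exact absurd (hfi.trans hfj.symm) hne
  · exact Or.inl (hext i j hij hfi hfj hrest)
  · exact Or.inr (hext j i hij.symm hfj hfi fun k hkj hki => hrest k hki hkj)
  · exact absurd (hfi.trans hfj.symm) hne

variable [LinearOrder α]

def midRank (d : ι → α) (i : ι) : ℚ :=
  (Set.ncard {j | j ≠ i ∧ d i < d j} : ℚ) + (1 / 2) * (Set.ncard {j | j ≠ i ∧ d j = d i} : ℚ)

theorem code_eq_midRank {n : ℕ} (p : Fin n → Pt) (y : Pt) : code p y = midRank (dist y ∘ p) :=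
  rfl

def rankWeight (a b : α) : ℚ :=
  if a < b then 1 else if b < a then 0 else 1 / 2

theorem rankWeight_self (a : α) : rankWeight a a = 1 / 2 := by
  simp [rankWeight]

theorem rankWeight_anti_left {a a' : α} (h : a ≤ a') (b : α) :
    rankWeight a' b ≤ rankWeight a b := by
  unfold rankWeight
  split_ifs <;> (try norm_num) <;> order

theorem midRank_eq_sum_rankWeight [Fintype ι] (d : ι → α) (i : ι) :
    midRank d i = ∑ k, rankWeight (d i) (d k) - 1 / 2 := by
  classical
  have hterm : ∀ k, rankWeight (d i) (d k) - (if k = i then 1 / 2 else 0) =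
      (if k ≠ i ∧ d i < d k then 1 else 0) + 1 / 2 * (if k ≠ i ∧ d k = d i then 1 else 0) := by
    intro k
    by_cases hk : k = i
    · subst hk; simp [rankWeight_self]
    · simp only [rankWeight, ne_eq, hk, not_false_eq_true, true_and, if_false, sub_zero]
      split_ifs <;> (try norm_num) <;> order
  have hsum := Finset.sum_congr rfl fun k (_ : k ∈ Finset.univ) => hterm k
  rw [Finset.sum_sub_distrib, Finset.sum_ite_eq', Finset.sum_add_distrib, ← Finset.mul_sum] at hsum
  simp only [Finset.mem_univ, if_true] at hsum
  rw [midRank, Set.ncard_eq_toFinset_card', Set.ncard_eq_toFinset_card', Set.toFinset_ofPred,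
    Set.toFinset_ofPred, Finset.card_filter, Finset.card_filter]
  push_cast
  linarith

theorem midRank_lt_midRank_of_lt [Fintype ι] {d : ι → α} {i j : ι} (h : d i < d j) :
    midRank d j < midRank d i := by
  rw [midRank_eq_sum_rankWeight, midRank_eq_sum_rankWeight, sub_lt_sub_iff_right]
  refine Finset.sum_lt_sum (fun k _ => rankWeight_anti_left h.le _) ⟨i, Finset.mem_univ _, ?_⟩
  simp [rankWeight, h, h.not_gt]

theorem midRank_eq_midRank_iff [Fintype ι] {d : ι → α} {i j : ι} :
    midRank d i = midRank d j ↔ d i = d j := by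
  refine ⟨fun h => ?_, fun h => by rw [midRank_eq_sum_rankWeight, midRank_eq_sum_rankWeight, h]⟩
  by_contra hne
  rcases lt_or_gt_of_ne hne with hlt | hlt
  · exact (midRank_lt_midRank_of_lt hlt).ne' h
  · exact (midRank_lt_midRank_of_lt hlt).ne h

theorem midRank_of_injective {d : ι → α} (hd : Injective d) (i : ι) :
    midRank d i = Set.ncard {k | k ≠ i ∧ d i < d k} := by
  have hties : {k | k ≠ i ∧ d k = d i} = ∅ :=
    Set.eq_empty_of_forall_notMem fun k hk => hk.1 (hd hk.2)
  simp [midRank, hties]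

namespace IsUniqueTie

variable {d d' : ι → α} {i j : ι}

theorem midRank_eq (h : IsUniqueTie d i j) :
    midRank d i = Set.ncard {k | k ≠ i ∧ d i < d k} + 1 / 2 := by
  have hties : {k | k ≠ i ∧ d k = d i} = {j} := by
    ext k
    refine ⟨fun hk => ?_, fun hk => ⟨hk ▸ h.1.symm, hk ▸ h.2.1.symm⟩⟩
    rcases Set.pair_eq_pair_iff.1 (h.2.2 k i hk.1 hk.2) with ⟨-, hij⟩ | ⟨hkj, -⟩
    exacts [absurd hij h.1, hkj]
  simp [midRank, hties]

theorem half_le_abs_midRank_sub (h : IsUniqueTie d i j) (hd' : Injective d') :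
    1 / 2 ≤ |midRank d i - midRank d' i| := by
  rw [h.midRank_eq, midRank_of_injective hd']
  rcases le_or_gt (Set.ncard {k | k ≠ i ∧ d' i < d' k}) (Set.ncard {k | k ≠ i ∧ d i < d k})
    with hle | hlt
  · have : (Set.ncard {k | k ≠ i ∧ d' i < d' k} : ℚ) ≤ Set.ncard {k | k ≠ i ∧ d i < d k} := by
      exact_mod_cast hle
    exact le_abs.2 (Or.inl (by linarith))
  · have : (Set.ncard {k | k ≠ i ∧ d i < d k} : ℚ) + 1 ≤ Set.ncard {k | k ≠ i ∧ d' i < d' k} := by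
      exact_mod_cast hlt
    exact le_abs.2 (Or.inr (by linarith))

theorem of_midRank_eq [Fintype ι] (h : IsUniqueTie d i j) (hd : midRank d' = midRank d) :
    IsUniqueTie d' i j := by
  have hties : ∀ k l, d' k = d' l ↔ d k = d l := fun k l => by
    rw [← midRank_eq_midRank_iff, hd, midRank_eq_midRank_iff]
  exact ⟨h.1, (hties i j).2 h.2.1, fun k l hkl hd' => h.2.2 k l hkl ((hties k l).1 hd')⟩

theorem rankWeight_sub_rankWeight [DecidableEq ι] (h : IsUniqueTie d i j)
    (hmono : ∀ k l, d k < d l → d' k < d' l) (hlt : d' i < d' j) (k l : ι) :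
    rankWeight (d' k) (d' l) - rankWeight (d k) (d l) =
      (if k = i ∧ l = j then 1 / 2 else 0) - (if k = j ∧ l = i then 1 / 2 else 0) := by
  rcases lt_trichotomy (d k) (d l) with hkl | hkl | hkl
  · have hij : ¬ (k = i ∧ l = j) := by rintro ⟨rfl, rfl⟩; exact hkl.ne h.2.1
    have hji : ¬ (k = j ∧ l = i) := by rintro ⟨rfl, rfl⟩; exact hkl.ne h.2.1.symm
    simp [rankWeight, hkl, hmono _ _ hkl, hij, hji]
  · rcases eq_or_ne k l with rfl | hne
    · have hij : ¬ (k = i ∧ k = j) := fun hk => h.1 (hk.1 ▸ hk.2)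
      have hji : ¬ (k = j ∧ k = i) := fun hk => h.1 (hk.2 ▸ hk.1)
      simp [rankWeight_self, hij, hji]
    · rcases Set.pair_eq_pair_iff.1 (h.2.2 k l hne hkl) with ⟨rfl, rfl⟩ | ⟨rfl, rfl⟩
      · simp [rankWeight, hlt, hkl, hne.symm]
        norm_num
      · simp [rankWeight, hlt, hlt.not_gt, hkl, hne.symm]
  · have hij : ¬ (k = i ∧ l = j) := by rintro ⟨rfl, rfl⟩; exact hkl.ne h.2.1.symm
    have hji : ¬ (k = j ∧ l = i) := by rintro ⟨rfl, rfl⟩; exact hkl.ne h.2.1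
    simp [rankWeight, hkl, hkl.not_gt, hmono _ _ hkl, (hmono _ _ hkl).not_gt, hij, hji]

variable [Fintype ι] [DecidableEq ι]

theorem midRank_eq_add_tieShift (h : IsUniqueTie d i j)
    (hmono : ∀ k l, d k < d l → d' k < d' l) (hlt : d' i < d' j) :
    midRank d' = midRank d + tieShift i j := by
  funext k
  have hsum := Finset.sum_congr rfl fun l (_ : l ∈ Finset.univ) =>
    h.rankWeight_sub_rankWeight hmono hlt k l
  simp only [Finset.sum_sub_distrib, ite_and, Finset.sum_ite_irrel, Finset.sum_ite_eq',
    Finset.mem_univ, if_true, Finset.sum_const_zero] at hsum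
  simp only [Pi.add_apply, midRank_eq_sum_rankWeight, tieShift, Pi.sub_apply, Pi.single_apply]
  linarith

theorem sum_abs_midRank_sub_eq_one_iff (h : IsUniqueTie d i j) (hd' : Injective d') :
    ∑ k, |midRank d k - midRank d' k| = 1 ↔
      midRank d' = midRank d + tieShift i j ∨ midRank d' = midRank d + tieShift j i := by
  refine ⟨fun hsum => ?_, ?_⟩
  · simp only [← sub_eq_iff_eq_add']
    refine eq_tieShift_of_sum_abs_eq_one h.1 ?_ ?_ ?_ ?_
    · simpa [abs_sub_comm] using h.half_le_abs_midRank_sub hd'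
    · simpa [abs_sub_comm] using h.symm.half_le_abs_midRank_sub hd'
    · simpa [midRank_eq_midRank_iff.2 h.2.1] using midRank_eq_midRank_iff.not.2 (hd'.ne h.1)
    · simpa [abs_sub_comm] using hsum
  · rintro (h' | h') <;> simp [h', sum_abs_tieShift, h.1, h.1.symm]

end IsUniqueTie

end MidRank

theorem eventually_dist_lt_of_dist_lt {X ι : Type*} [PseudoMetricSpace X] [Finite ι]
    (p : ι → X) (x : X) :
    ∀ᶠ y in 𝓝 x, ∀ k l, dist x (p k) < dist x (p l) → dist y (p k) < dist y (p l) := by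
  simp only [eventually_all]
  intro k l h
  exact (continuous_id.dist continuous_const).continuousAt.eventually_lt
    (continuous_id.dist continuous_const).continuousAt h

theorem dist_add_smul_sub_lt {E : Type*} [NormedAddCommGroup E] [InnerProductSpace ℝ E]
    {z a b : E} (hab : a ≠ b) (h : dist z a = dist z b) {t : ℝ} (ht : 0 < t) :
    dist (z + t • (a - b)) a < dist (z + t • (a - b)) b := by
  have hsq : ∀ c, dist (z + t • (a - b)) c ^ 2 =
      dist z c ^ 2 + 2 * t * inner ℝ (z - c) (a - b) + t ^ 2 * ‖a - b‖ ^ 2 := by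
    intro c
    rw [dist_eq_norm, dist_eq_norm, show z + t • (a - b) - c = (z - c) + t • (a - b) by abel,
      norm_add_sq_real, inner_smul_right, norm_smul, mul_pow, Real.norm_eq_abs, sq_abs]
    ring
  have hinner : inner ℝ (z - a) (a - b) - inner ℝ (z - b) (a - b) = -‖a - b‖ ^ 2 := by
    rw [← inner_sub_left, show z - a - (z - b) = -(a - b) by abel, inner_neg_left,
      real_inner_self_eq_norm_sq]
  have hpos : 0 < ‖a - b‖ := norm_pos_iff.2 (sub_ne_zero.2 hab)
  refine lt_of_pow_lt_pow_left₀ 2 dist_nonneg ?_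
  rw [hsq, hsq, h]
  nlinarith [mul_pos ht (pow_pos hpos 2)]

namespace IsUniqueTie

variable {X ι : Type*} [Fintype ι] [DecidableEq ι] {i j : ι}

theorem eq_add_tieShift_of_mem_closure [PseudoMetricSpace X] {p : ι → X} {e : X} {c : ι → ℚ}
    (he : IsUniqueTie (dist e ∘ p) i j) (hc : c i ≠ c j)
    (hmem : e ∈ closure {y | midRank (dist y ∘ p) = c}) :
    c = midRank (dist e ∘ p) + tieShift i j ∨ c = midRank (dist e ∘ p) + tieShift j i := by
  obtain ⟨y, rfl : midRank (dist y ∘ p) = c, hmono⟩ :=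
    ((mem_closure_iff_frequently.1 hmem).and_eventually (eventually_dist_lt_of_dist_lt p e)).exists
  have hyij : dist y (p i) ≠ dist y (p j) := fun h => hc (midRank_eq_midRank_iff.2 h)
  rcases hyij.lt_or_gt with hlt | hlt
  · exact Or.inl (he.midRank_eq_add_tieShift hmono hlt)
  · exact Or.inr (he.symm.midRank_eq_add_tieShift hmono hlt)

theorem mem_closure_of_eq_add_tieShift [NormedAddCommGroup X] [InnerProductSpace ℝ X]
    {p : ι → X} {e : X} {c : ι → ℚ} (he : IsUniqueTie (dist e ∘ p) i j) (hp : p i ≠ p j)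
    (hc : c = midRank (dist e ∘ p) + tieShift i j) :
    e ∈ closure {y | midRank (dist y ∘ p) = c} := by
  have htend : Tendsto (fun t : ℝ => e + t • (p i - p j)) (𝓝[>] 0) (𝓝 e) := by
    have hcont : Continuous fun t : ℝ => e + t • (p i - p j) := by fun_prop
    simpa using (hcont.tendsto 0).mono_left nhdsWithin_le_nhds
  refine mem_closure_of_tendsto htend ?_
  filter_upwards [htend.eventually (eventually_dist_lt_of_dist_lt p e), self_mem_nhdsWithin]
    with t hmono ht
  rw [hc]
  exact he.midRank_eq_add_tieShift hmono (dist_add_smul_sub_lt hp he.2.1 ht)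

theorem mem_closure_iff [NormedAddCommGroup X] [InnerProductSpace ℝ X]
    {p : ι → X} {e : X} {c : ι → ℚ} (he : IsUniqueTie (dist e ∘ p) i j) (hp : p i ≠ p j)
    (hc : c i ≠ c j) :
    e ∈ closure {y | midRank (dist y ∘ p) = c} ↔
      c = midRank (dist e ∘ p) + tieShift i j ∨ c = midRank (dist e ∘ p) + tieShift j i := by
  refine ⟨he.eq_add_tieShift_of_mem_closure hc, ?_⟩
  rintro (h | h)
  exacts [he.mem_closure_of_eq_add_tieShift hp h, he.symm.mem_closure_of_eq_add_tieShift hp.symm h]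

end IsUniqueTie

theorem edge_cell_containment_general {n : ℕ} (p : Fin n → Pt)
    (hp : Function.Injective p) (e x : Pt)
    (he : EdgePoint p e) (hx : CellPoint p x) :
    particle p e ⊆ closure (particle p x) ↔ chromDist p e x = 1 := by
  simp only [particle, chromDist, code_eq_midRank]
  obtain ⟨i, j, ⟨hij, hije⟩, huniq⟩ := he
  have he' : IsUniqueTie (dist e ∘ p) i j := ⟨hij, hije, fun k l hkl h => huniq k l ⟨hkl, h⟩⟩
  have hx' : Injective (dist x ∘ p) := fun k l h => by_contra fun hkl => hx k l ⟨hkl, h⟩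
  have hxij : midRank (dist x ∘ p) i ≠ midRank (dist x ∘ p) j :=
    midRank_eq_midRank_iff.not.2 (hx'.ne hij)
  rw [he'.sum_abs_midRank_sub_eq_one_iff hx']
  constructor
  · exact fun hsub => (he'.mem_closure_iff (hp.ne hij) hxij).1 (hsub rfl)
  · intro hcode e' (he'' : midRank (dist e' ∘ p) = midRank (dist e ∘ p))
    exact ((he'.of_midRank_eq he'').mem_closure_iff (hp.ne hij) hxij).2 (by rwa [he''])

/-- edge–cell containment: the edge `Ω(e)` of an edge point `e` is contained in
the closure of the cell `Ω(x)` of a cell point `x` iff `δ(e,x) = 1`. -/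
theorem edge_cell_containment {n : ℕ} (hn : 2 ≤ n) (p : Fin n → Pt)
    (hp : Function.Injective p) (e x : Pt)
    (he : EdgePoint p e) (hx : CellPoint p x) :
    particle p e ⊆ closure (particle p x) ↔ chromDist p e x = 1 :=
  edge_cell_containment_general p hp e x he hx
end
end

section
/- Connected cells: let x₁, x₂ be cell points with code(x₁) ≠ code(x₂). Then the intersection of the topological closures of Ω(x₁) and Ω(x₂) contains an edge point (i.e., the two cells are connected, sharing a common edge) if and only if δ(x₁,x₂) = 2. -/
noncomputable section

open Metric

/-!
At a cell point the generators are strictly ordered by distance, and the code is the rank vector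
of this order, a permutation of `0, …, n - 1`. Two such permutations are at `ℓ¹`-distance `2`
exactly when they differ by swapping two consecutive ranks, i.e. when the two orders differ only
in the comparison of one pair `p i, p j`.

Near an edge point on the bisector of `p i` and `p j` every other comparison is frozen, so two
cells whose closures contain it have orders differing only on that pair, and different codes
force them to differ there. Conversely, if the orders at `x₁` and `x₂` differ only on `{i, j}`,
the region where all other comparisons of `x₁` persist is an open intersection of half-planes;
it contains the segment `[x₁, x₂]`, which crosses the bisector of `p i, p j` at an edge point.
Moving off that point towards `p i` or `p j` enters the cell of `x₁` or of `x₂`.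
-/

open Finset Function Filter Topology RealInnerProductSpace

theorem isOpen_setOf_forall_dist_lt {E ι : Type*} [PseudoMetricSpace E] [Finite ι] (a : ι → E)
    (P : ι → ι → Prop) : IsOpen {z | ∀ u v, P u v → dist z (a u) < dist z (a v)} := by
  simp only [Set.ofPred_forall]
  exact isOpen_iInter_of_finite fun u => isOpen_iInter_of_finite fun v =>
    isOpen_iInter_of_finite fun _ =>
      isOpen_lt (continuous_id.dist continuous_const) (continuous_id.dist continuous_const)

section Geometry
variable {E : Type*} [NormedAddCommGroup E] [InnerProductSpace ℝ E]

theorem dist_lt_dist_iff_inner_lt (a b z : E) :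
    dist z a < dist z b ↔ ⟪b - a, z⟫ < (‖b‖ ^ 2 - ‖a‖ ^ 2) / 2 := by
  rw [dist_eq_norm, dist_eq_norm, ← sq_lt_sq₀ (norm_nonneg _) (norm_nonneg _),
    norm_sub_sq_real, norm_sub_sq_real, inner_sub_left, real_inner_comm a, real_inner_comm b]
  constructor <;> intro h <;> linarith

theorem convex_setOf_dist_lt_dist (a b : E) : Convex ℝ {z | dist z a < dist z b} := by
  simp_rw [dist_lt_dist_iff_inner_lt a b]
  exact convex_halfSpace_lt (innerₛₗ ℝ (b - a)).isLinear _

theorem convex_setOf_forall_dist_lt {ι : Type*} (a : ι → E) (P : ι → ι → Prop) :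
    Convex ℝ {z | ∀ u v, P u v → dist z (a u) < dist z (a v)} := by
  simp only [Set.ofPred_forall]
  exact convex_iInter fun u => convex_iInter fun v => convex_iInter fun _ =>
    convex_setOf_dist_lt_dist _ _

theorem exists_mem_segment_dist_eq_dist {x₁ x₂ a b : E} (h₁ : dist x₁ a < dist x₁ b)
    (h₂ : dist x₂ b < dist x₂ a) : ∃ y ∈ segment ℝ x₁ x₂, dist y a = dist y b :=
  (convex_segment x₁ x₂).isPreconnected.intermediate_value₂ (left_mem_segment ℝ x₁ x₂)
    (right_mem_segment ℝ x₁ x₂) (continuous_id.dist continuous_const).continuousOn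
    (continuous_id.dist continuous_const).continuousOn h₁.le h₂.le

theorem dist_add_smul_sub_lt_of_dist_eq {a b y : E} (hab : a ≠ b) (hy : dist y a = dist y b)
    {t : ℝ} (ht : 0 < t) : dist (y + t • (a - y)) a < dist (y + t • (a - y)) b := by
  rw [dist_eq_norm, dist_eq_norm] at hy ⊢
  -- `‖z - a‖ ^ 2 - ‖z - b‖ ^ 2` is affine in `z`, vanishes at `y` and is `-‖a - b‖ ^ 2` at `a`
  have key : ‖y + t • (a - y) - b‖ ^ 2 = ‖y + t • (a - y) - a‖ ^ 2 + t * ‖a - b‖ ^ 2 := by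
    rw [show y + t • (a - y) - a = (1 - t) • (y - a) by module,
      show y + t • (a - y) - b = (y - b) - t • (y - a) by module,
      show a - b = (y - b) - (y - a) by abel, norm_smul, mul_pow, Real.norm_eq_abs, sq_abs,
      norm_sub_sq_real (y - b) (t • (y - a)), norm_sub_sq_real (y - b) (y - a), norm_smul,
      mul_pow, Real.norm_eq_abs, sq_abs, real_inner_smul_right, ← hy]
    ring
  have hpos : 0 < t * ‖a - b‖ ^ 2 := by positivity [sub_ne_zero.mpr hab]
  rw [← sq_lt_sq₀ (norm_nonneg _) (norm_nonneg _)]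
  linarith

end Geometry

section Combinatorics
variable {ι : Type*} [DecidableEq ι]

theorem apply_swap_lt_apply_swap_iff {f : ι → ℕ} (hf : Injective f) {i j : ι}
    (hij : f i = f j + 1) {u v : ι} (huv : ({u, v} : Set ι) ≠ {i, j}) :
    f (Equiv.swap i j u) < f (Equiv.swap i j v) ↔ f u < f v := by
  simp only [Ne, Set.pair_eq_pair_iff, ← hf.eq_iff] at huv
  rw [hf.map_swap, hf.map_swap, Equiv.swap_apply_def, Equiv.swap_apply_def]
  split_ifs <;> omega

variable [Fintype ι]

theorem eq_of_sum_abs_sub_eq_two {f g : ι → ℤ} (hsum : ∑ l, |f l - g l| = 2) {i j : ι}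
    (hij : i ≠ j) (hi : f i ≠ g i) (hj : f j ≠ g j) {l : ι} (hli : l ≠ i) (hlj : l ≠ j) :
    f l = g l := by
  have h := hsum ▸ sum_le_sum_of_subset_of_nonneg (subset_univ {i, j, l})
    fun m _ _ => abs_nonneg (f m - g m)
  rw [sum_insert (by simp [hij, hli.symm]), sum_pair hlj.symm] at h
  have := Int.one_le_abs (sub_ne_zero.2 hi)
  have := Int.one_le_abs (sub_ne_zero.2 hj)
  have : |f l - g l| = 0 := by linarith [abs_nonneg (f l - g l)]
  rwa [abs_eq_zero, sub_eq_zero] at this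

theorem exists_eq_comp_swap_of_sum_abs_sub_eq_two {f g : ι → ℕ} (hf : Injective f)
    (hg : Injective g) (hfg : Set.range f = Set.range g) (hne : f ≠ g)
    (hsum : ∑ l, |(f l : ℤ) - g l| = 2) :
    ∃ i j, f i = f j + 1 ∧ g = f ∘ Equiv.swap i j := by
  obtain ⟨i, hi⟩ : ∃ i, f i ≠ g i := by
    by_contra! h
    exact hne (funext h)
  obtain ⟨j, hgj⟩ : f i ∈ Set.range g := hfg ▸ Set.mem_range_self i
  have hji : j ≠ i := fun h => hi (h ▸ hgj).symm
  have hfix {l : ι} (hli : l ≠ i) (hlj : l ≠ j) : g l = f l := by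
    have := eq_of_sum_abs_sub_eq_two hsum hji.symm (by exact_mod_cast hi)
      (by have := hf.ne hji; omega) hli hlj
    exact_mod_cast this.symm
  have hgi : g i = f j := by
    obtain ⟨k, hk⟩ : g i ∈ Set.range f := hfg ▸ Set.mem_range_self i
    rcases eq_or_ne k j with rfl | hkj
    · exact hk.symm
    have hki : k ≠ i := fun h => hi (h ▸ hk)
    exact absurd (hg ((hfix hki hkj).trans hk)) hki
  have hswap : g = f ∘ Equiv.swap i j := by
    funext l
    rw [comp_apply, Equiv.swap_apply_def]
    split_ifs with hli hlj
    · rw [hli, hgi]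
    · rw [hlj, hgj]
    · exact hfix hli hlj
  have hle : |(f i : ℤ) - f j| ≤ 1 := by
    have := hsum ▸ sum_le_sum_of_subset_of_nonneg (subset_univ {i, j})
      fun m _ _ => abs_nonneg ((f m : ℤ) - g m)
    rw [sum_pair hji.symm, hgi, hgj, abs_sub_comm (f j : ℤ)] at this
    linarith
  obtain h | h : f i = f j + 1 ∨ f j = f i + 1 := by
    have := hf.ne hji
    rw [abs_le] at hle
    omega
  · exact ⟨i, j, h, hswap⟩
  · exact ⟨j, i, h, Equiv.swap_comm i j ▸ hswap⟩

end Combinatorics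

section Chromatic
variable {n : ℕ} {p : Fin n → Pt}

def farCount (p : Fin n → Pt) (x : Pt) (i : Fin n) : ℕ := #{m | dist x (p i) < dist x (p m)}

theorem code_eq_farCount_add (x : Pt) (i : Fin n) :
    code p x i = farCount p x i + ((#{m | dist x (p m) = dist x (p i)} : ℚ) - 1) / 2 := by
  have hfar : {j | j ≠ i ∧ dist x (p i) < dist x (p j)}
      = ↑({m | dist x (p i) < dist x (p m)} : Finset (Fin n)) := by
    ext m
    simp only [Set.mem_ofPred_eq, coe_filter, mem_univ, true_and, and_iff_right_iff_imp]
    rintro h rfl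
    exact h.false
  have htie : {j | j ≠ i ∧ dist x (p j) = dist x (p i)}
      = ↑(({m | dist x (p m) = dist x (p i)} : Finset (Fin n)).erase i) := by
    ext m
    simp [and_comm]
  have hi : i ∈ ({m | dist x (p m) = dist x (p i)} : Finset (Fin n)) := by simp
  rw [code, hfar, htie, Set.ncard_coe_finset, Set.ncard_coe_finset, card_erase_of_mem hi,
    Nat.cast_sub (card_pos.2 ⟨i, hi⟩), farCount]
  ring

theorem code_eq_of_tie {x : Pt} {i j : Fin n} (h : Tie p x i j) : code p x i = code p x j := by
  rw [code_eq_farCount_add, code_eq_farCount_add, farCount, farCount, h.2]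

theorem farCount_lt_farCount {x : Pt} {u v : Fin n} (h : dist x (p u) < dist x (p v)) :
    farCount p x v < farCount p x u := by
  refine card_lt_card ⟨fun m hm => ?_, fun hsub => ?_⟩
  · simp only [mem_filter, mem_univ, true_and] at hm ⊢
    exact h.trans hm
  · have := hsub (by simpa using h)
    simp at this

theorem farCount_lt (x : Pt) (i : Fin n) : farCount p x i < n := by
  simpa [farCount] using card_lt_card (filter_ssubset.2 ⟨i, mem_univ i, lt_irrefl (dist x (p i))⟩)

namespace CellPoint
variable {x : Pt}

theorem lt_or_gt (hx : CellPoint p x) {u v : Fin n} (huv : u ≠ v) :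
    dist x (p u) < dist x (p v) ∨ dist x (p v) < dist x (p u) :=
  lt_or_gt_of_ne fun h => hx u v ⟨huv, h⟩

theorem code_eq_farCount (hx : CellPoint p x) (i : Fin n) : code p x i = farCount p x i := by
  have : ({m | dist x (p m) = dist x (p i)} : Finset (Fin n)) = {i} := by
    ext m
    simp only [mem_filter, mem_univ, true_and, mem_singleton]
    exact ⟨fun h => by_contra fun hm => hx m i ⟨hm, h⟩, fun h => h ▸ rfl⟩
  rw [code_eq_farCount_add, this]
  simp

theorem farCount_lt_farCount_iff (hx : CellPoint p x) {u v : Fin n} :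
    farCount p x v < farCount p x u ↔ dist x (p u) < dist x (p v) := by
  refine ⟨fun h => ?_, farCount_lt_farCount⟩
  rcases eq_or_ne u v with rfl | huv
  · exact absurd h (lt_irrefl _)
  · exact (hx.lt_or_gt huv).resolve_right fun h' => (farCount_lt_farCount h').asymm h

theorem farCount_injective (hx : CellPoint p x) : Injective (farCount p x) := by
  intro u v h
  by_contra huv
  rcases hx.lt_or_gt huv with h' | h'
  · exact (farCount_lt_farCount h').ne' h
  · exact (farCount_lt_farCount h').ne h

theorem range_farCount (hx : CellPoint p x) : Set.range (farCount p x) = Set.Iio n := by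
  let F : Fin n → Fin n := fun i => ⟨farCount p x i, farCount_lt x i⟩
  have hF : Surjective F :=
    Finite.surjective_of_injective fun u v h => hx.farCount_injective (congrArg Fin.val h)
  refine Set.Subset.antisymm (Set.range_subset_iff.2 (farCount_lt x)) fun k hk => ?_
  obtain ⟨i, hi⟩ := hF ⟨k, hk⟩
  exact ⟨i, congrArg Fin.val hi⟩

theorem code_injective (hx : CellPoint p x) : Injective (code p x) := by
  intro u v h
  simp only [hx.code_eq_farCount] at h
  exact hx.farCount_injective (by exact_mod_cast h)

theorem of_code_eq (hx : CellPoint p x) {y : Pt} (h : code p y = code p x) : CellPoint p y :=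
  fun _ _ huv => huv.1 (hx.code_injective (h ▸ code_eq_of_tie huv))

theorem code_eq_of_forall_dist_lt_imp (hx : CellPoint p x) {z : Pt}
    (h : ∀ u v, dist x (p u) < dist x (p v) → dist z (p u) < dist z (p v)) :
    code p z = code p x := by
  have hz : CellPoint p z := by
    rintro u v ⟨huv, heq⟩
    rcases hx.lt_or_gt huv with h' | h'
    · exact (h u v h').ne heq
    · exact (h v u h').ne' heq
  have hiff (u v : Fin n) : dist z (p u) < dist z (p v) ↔ dist x (p u) < dist x (p v) := by
    refine ⟨fun hzuv => ?_, h u v⟩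
    rcases eq_or_ne u v with rfl | huv
    · exact absurd hzuv (lt_irrefl _)
    · exact (hx.lt_or_gt huv).resolve_right fun h' => (h v u h').asymm hzuv
  funext i
  simp only [hz.code_eq_farCount, hx.code_eq_farCount, farCount, hiff]

end CellPoint

theorem farCount_eq_farCount_add_one {i j : Fin n} {x y : Pt} (hxy : ∀ m, m ≠ j →
      (dist x (p i) < dist x (p m) ↔ dist y (p i) < dist y (p m)))
    (hx : dist x (p i) < dist x (p j)) (hy : ¬ dist y (p i) < dist y (p j)) :
    farCount p x i = farCount p y i + 1 := by
  rw [farCount, farCount, ← card_insert_of_notMem (by simpa using hy)]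
  congr 1
  ext m
  simp only [mem_filter, mem_univ, true_and, mem_insert]
  rcases eq_or_ne m j with rfl | hm
  · simp [hx]
  · simp [hm, hxy m hm]

def SameOrderExcept (p : Fin n → Pt) (i j : Fin n) (x y : Pt) : Prop :=
  ∀ u v, ({u, v} : Set (Fin n)) ≠ {i, j} →
    (dist x (p u) < dist x (p v) ↔ dist y (p u) < dist y (p v))

theorem forall_dist_lt_imp_of_except {x z : Pt} {i j : Fin n}
    (hx : dist x (p i) < dist x (p j)) (hz : dist z (p i) < dist z (p j))
    (h : ∀ u v, ({u, v} : Set (Fin n)) ≠ {i, j} →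
      dist x (p u) < dist x (p v) → dist z (p u) < dist z (p v)) :
    ∀ u v, dist x (p u) < dist x (p v) → dist z (p u) < dist z (p v) := by
  intro u v huv
  by_cases hpair : ({u, v} : Set (Fin n)) = {i, j}
  · rcases Set.pair_eq_pair_iff.1 hpair with ⟨rfl, rfl⟩ | ⟨rfl, rfl⟩
    · exact hz
    · exact absurd huv hx.asymm
  · exact h u v hpair huv

namespace SameOrderExcept
variable {i j : Fin n} {x y : Pt}

theorem swap (h : SameOrderExcept p i j x y) : SameOrderExcept p j i x y :=
  fun u v huv => h u v (Set.pair_comm j i ▸ huv)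

theorem code_eq (h : SameOrderExcept p i j x y) (hx : CellPoint p x)
    (hxij : dist x (p i) < dist x (p j)) (hyij : dist y (p i) < dist y (p j)) :
    code p y = code p x :=
  hx.code_eq_of_forall_dist_lt_imp
    (forall_dist_lt_imp_of_except hxij hyij fun u v huv => (h u v huv).1)

theorem chromDist_eq_two_of_lt (h : SameOrderExcept p i j x y) (hx : CellPoint p x)
    (hy : CellPoint p y) (hij : i ≠ j) (hxij : dist x (p i) < dist x (p j))
    (hyij : dist y (p j) < dist y (p i)) : chromDist p x y = 2 := by
  have hi : farCount p x i = farCount p y i + 1 :=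
    farCount_eq_farCount_add_one (fun m hm => h i m (by simp [Set.pair_eq_pair_iff, hm, hij]))
      hxij hyij.asymm
  have hj : farCount p y j = farCount p x j + 1 :=
    farCount_eq_farCount_add_one
      (fun m hm => (h j m (by simp [Set.pair_eq_pair_iff, hm, hij.symm])).symm) hyij hxij.asymm
  rw [chromDist, Fintype.sum_eq_add i j hij]
  · simp only [hx.code_eq_farCount, hy.code_eq_farCount, hi, hj]
    push_cast
    norm_num
  · rintro l ⟨hli, hlj⟩
    have hl : farCount p x l = farCount p y l := by
      simp only [farCount]
      exact congrArg card (filter_congr fun m _ => h l m (by simp [Set.pair_eq_pair_iff, hli, hlj]))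
    rw [hx.code_eq_farCount, hy.code_eq_farCount, hl, sub_self, abs_zero]

theorem chromDist_eq_two (h : SameOrderExcept p i j x y) (hx : CellPoint p x)
    (hy : CellPoint p y) (hij : i ≠ j) (hne : code p x ≠ code p y) : chromDist p x y = 2 := by
  rcases hx.lt_or_gt hij with hxij | hxij <;> rcases hy.lt_or_gt hij with hyij | hyij
  · exact absurd (h.code_eq hx hxij hyij).symm hne
  · exact h.chromDist_eq_two_of_lt hx hy hij hxij hyij
  · exact h.swap.chromDist_eq_two_of_lt hx hy hij.symm hxij hyij
  · exact absurd (h.swap.code_eq hx hxij hyij).symm hne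

end SameOrderExcept

theorem sameOrderExcept_of_forall_dist_lt_imp {i j : Fin n} {y z w : Pt}
    (hy : ∀ u v, Tie p y u v → ({u, v} : Set (Fin n)) = {i, j})
    (hz : ∀ u v, dist y (p u) < dist y (p v) → dist z (p u) < dist z (p v))
    (hw : ∀ u v, dist y (p u) < dist y (p v) → dist w (p u) < dist w (p v)) :
    SameOrderExcept p i j z w := by
  intro u v huv
  rcases eq_or_ne u v with rfl | huv'
  · exact iff_of_false (lt_irrefl _) (lt_irrefl _)
  rcases lt_trichotomy (dist y (p u)) (dist y (p v)) with h | h | h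
  · exact iff_of_true (hz u v h) (hw u v h)
  · exact absurd (hy u v ⟨huv', h⟩) huv
  · exact iff_of_false (hz v u h).asymm (hw v u h).asymm

theorem chromDist_eq_two_of_mem_closure {x₁ x₂ y : Pt} (hx₁ : CellPoint p x₁)
    (hx₂ : CellPoint p x₂) (hne : code p x₁ ≠ code p x₂) (hy : EdgePoint p y)
    (hy₁ : y ∈ closure (particle p x₁)) (hy₂ : y ∈ closure (particle p x₂)) :
    chromDist p x₁ x₂ = 2 := by
  obtain ⟨i, j, ⟨hij, -⟩, hyij⟩ := hy
  have hnear : ∀ᶠ z in 𝓝 y, ∀ u v, dist y (p u) < dist y (p v) → dist z (p u) < dist z (p v) :=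
    (isOpen_setOf_forall_dist_lt p _).mem_nhds fun _ _ h => h
  obtain ⟨z, hz, hz₁ : code p z = code p x₁⟩ := mem_closure_iff_nhds.1 hy₁ _ hnear
  obtain ⟨w, hw, hw₂ : code p w = code p x₂⟩ := mem_closure_iff_nhds.1 hy₂ _ hnear
  have hzw := sameOrderExcept_of_forall_dist_lt_imp hyij hz hw
  rw [← hz₁, ← hw₂] at hne
  rw [chromDist, ← hz₁, ← hw₂]
  exact hzw.chromDist_eq_two (hx₁.of_code_eq hz₁) (hx₂.of_code_eq hw₂) hij hne

theorem exists_sameOrderExcept_of_chromDist_eq_two {x₁ x₂ : Pt} (hx₁ : CellPoint p x₁)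
    (hx₂ : CellPoint p x₂) (hne : code p x₁ ≠ code p x₂) (h : chromDist p x₁ x₂ = 2) :
    ∃ i j, i ≠ j ∧ dist x₁ (p i) < dist x₁ (p j) ∧ dist x₂ (p j) < dist x₂ (p i) ∧
      SameOrderExcept p i j x₁ x₂ := by
  have hsum : ∑ l, |(farCount p x₁ l : ℤ) - farCount p x₂ l| = 2 := by
    have : ((∑ l, |(farCount p x₁ l : ℤ) - farCount p x₂ l| : ℤ) : ℚ) = 2 := by
      push_cast
      simpa only [chromDist, hx₁.code_eq_farCount, hx₂.code_eq_farCount] using h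
    exact_mod_cast this
  have hne' : farCount p x₁ ≠ farCount p x₂ := fun hf =>
    hne (funext fun l => by rw [hx₁.code_eq_farCount, hx₂.code_eq_farCount, hf])
  obtain ⟨i, j, hij, hswap⟩ := exists_eq_comp_swap_of_sum_abs_sub_eq_two hx₁.farCount_injective
    hx₂.farCount_injective (by rw [hx₁.range_farCount, hx₂.range_farCount]) hne' hsum
  have hi : farCount p x₂ i = farCount p x₁ j := by simp [hswap]
  have hj : farCount p x₂ j = farCount p x₁ i := by simp [hswap]
  refine ⟨i, j, fun h => by simp [h] at hij, hx₁.farCount_lt_farCount_iff.1 (by omega),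
    hx₂.farCount_lt_farCount_iff.1 (by omega), fun u v huv => ?_⟩
  rw [← hx₁.farCount_lt_farCount_iff, ← hx₂.farCount_lt_farCount_iff, hswap, comp_apply,
    comp_apply, apply_swap_lt_apply_swap_iff hx₁.farCount_injective hij (Set.pair_comm u v ▸ huv)]

theorem mem_closure_particle {i j : Fin n} {x y : Pt} (hpij : p i ≠ p j) (hx : CellPoint p x)
    (hxij : dist x (p i) < dist x (p j)) (hyij : dist y (p i) = dist y (p j))
    (hnear : ∀ᶠ z in 𝓝 y, ∀ u v, ({u, v} : Set (Fin n)) ≠ {i, j} ∧ dist x (p u) < dist x (p v) →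
      dist z (p u) < dist z (p v)) :
    y ∈ closure (particle p x) := by
  have hray : Tendsto (fun t : ℝ => y + t • (p i - y)) (𝓝[>] 0) (𝓝 y) := by
    have hcont : Continuous fun t : ℝ => y + t • (p i - y) := by fun_prop
    simpa using (hcont.tendsto 0).mono_left nhdsWithin_le_nhds
  refine mem_closure_of_tendsto hray ?_
  filter_upwards [hray.eventually hnear, self_mem_nhdsWithin] with t ht (htpos : 0 < t)
  exact hx.code_eq_of_forall_dist_lt_imp (forall_dist_lt_imp_of_except hxij
    (dist_add_smul_sub_lt_of_dist_eq hpij hyij htpos) fun u v huv hlt => ht u v ⟨huv, hlt⟩)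

theorem exists_edgePoint_mem_closure {i j : Fin n} {x₁ x₂ : Pt} (hp : Injective p)
    (hx₁ : CellPoint p x₁) (hx₂ : CellPoint p x₂) (hij : i ≠ j)
    (h₁ : dist x₁ (p i) < dist x₁ (p j)) (h₂ : dist x₂ (p j) < dist x₂ (p i))
    (h : SameOrderExcept p i j x₁ x₂) :
    ∃ y, EdgePoint p y ∧ y ∈ closure (particle p x₁) ∩ closure (particle p x₂) := by
  set R := {z : Pt | ∀ u v, ({u, v} : Set (Fin n)) ≠ {i, j} ∧ dist x₁ (p u) < dist x₁ (p v) →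
    dist z (p u) < dist z (p v)}
  obtain ⟨y, hyseg, hyij⟩ := exists_mem_segment_dist_eq_dist h₁ h₂
  have hyR : y ∈ R := (convex_setOf_forall_dist_lt p _).segment_subset (fun _ _ huv => huv.2)
    (fun u v huv => (h u v huv.1).1 huv.2) hyseg
  have hnear : ∀ᶠ z in 𝓝 y, z ∈ R := (isOpen_setOf_forall_dist_lt p _).mem_nhds hyR
  refine ⟨y, ⟨i, j, ⟨hij, hyij⟩, fun u v ⟨huv, huvy⟩ => ?_⟩, ?_, ?_⟩
  · by_contra hpair
    rcases hx₁.lt_or_gt huv with hlt | hlt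
    · exact (hyR u v ⟨hpair, hlt⟩).ne huvy
    · exact (hyR v u ⟨Set.pair_comm u v ▸ hpair, hlt⟩).ne' huvy
  · exact mem_closure_particle (hp.ne hij) hx₁ h₁ hyij hnear
  · refine mem_closure_particle (hp.ne hij.symm) hx₂ h₂ hyij.symm
      (hnear.mono fun z hz u v huv => ?_)
    have hpair : ({u, v} : Set (Fin n)) ≠ {i, j} := Set.pair_comm i j ▸ huv.1
    exact hz u v ⟨hpair, (h u v hpair).2 huv.2⟩

end Chromatic

theorem connected_cells_general {n : ℕ} (p : Fin n → Pt)
    (hp : Function.Injective p) (x₁ x₂ : Pt)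
    (hx₁ : CellPoint p x₁) (hx₂ : CellPoint p x₂) (hne : code p x₁ ≠ code p x₂) :
    (∃ y : Pt, EdgePoint p y ∧
        y ∈ closure (particle p x₁) ∩ closure (particle p x₂)) ↔
      chromDist p x₁ x₂ = 2 := by
  refine ⟨fun ⟨y, hy, hy₁, hy₂⟩ => chromDist_eq_two_of_mem_closure hx₁ hx₂ hne hy hy₁ hy₂,
    fun h => ?_⟩
  obtain ⟨i, j, hij, h₁, h₂, hsame⟩ := exists_sameOrderExcept_of_chromDist_eq_two hx₁ hx₂ hne h
  exact exists_edgePoint_mem_closure hp hx₁ hx₂ hij h₁ h₂ hsame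

/-- connected cells: two cells `Ω(x₁) ≠ Ω(x₂)` share a common edge (their
closures meet in an edge point) iff `δ(x₁,x₂) = 2`. -/
theorem connected_cells {n : ℕ} (hn : 2 ≤ n) (p : Fin n → Pt)
    (hp : Function.Injective p) (x₁ x₂ : Pt)
    (hx₁ : CellPoint p x₁) (hx₂ : CellPoint p x₂) (hne : code p x₁ ≠ code p x₂) :
    (∃ y : Pt, EdgePoint p y ∧
        y ∈ closure (particle p x₁) ∩ closure (particle p x₂)) ↔
      chromDist p x₁ x₂ = 2 :=
  connected_cells_general p hp x₁ x₂ hx₁ hx₂ hne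
end
end
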